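/- Fix m₀ with 0 ≤ m₀ ≤ m, and t with d ≤ 2m+1, t = ⌊(d−1)/2⌋. Any code C in the SECC space S(m,L,w) with minimum Hamming distance d satisfies |C| ≤ B(L,w−1)^{m₀}·B(L,w)^{m−m₀} / [ Σ_{t₁+t₂ ≤ t} C(m₀,t₁)·C(m−m₀,t₂)·L^{t₁}·(L−w)^{t₂} ], where B(L,v) = Σ_{j=v}^{L} C(L,j). -/

import Mathlib

/-!
Sphere packing inside the box `A` of words whose first `m₀` blocks have weight `≥ w - 1` and
whose other blocks have weight `≥ w`: it contains `S(m,L,w)` and has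
`B(L,w-1)^m₀ · B(L,w)^(m-m₀)` elements. The radius-`t` balls in `A` around codewords are
disjoint, and each contains the words obtained from its centre by flipping one bit in each of at
most `t` blocks, where a flip in one of the first `m₀` blocks is arbitrary (`L` choices) and a
flip in a later block must keep its weight `≥ w` (at least `L - w` choices: the zeros). Sorting
these flip patterns by how many flipped blocks lie among the first `m₀` gives the denominator.
-/

open Finset

/-- The Hamming weight of a length-`L` binary subblock. -/
def wt {L : ℕ} (b : Fin L → Bool) : ℕ :=
  (Finset.univ.filter (fun j => b j = true)).card

/-- Hamming distance between two binary words of length `mL`, given as `m`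
subblocks of length `L`. -/
def hdist {m L : ℕ} (x y : Fin m → Fin L → Bool) : ℕ :=
  ∑ i, hammingDist (x i) (y i)

/-- `B(L, v) = Σ_{j=v}^{L} C(L, j)`. -/
def bge (L v : ℕ) : ℕ := ∑ j ∈ Finset.Icc v L, Nat.choose L j

section BitFlip

variable {α : Type*} [DecidableEq α]

def flipBit (b : α → Bool) (j : α) : α → Bool :=
  Function.update b j (!b j)

lemma flipBit_ne (b : α → Bool) (j : α) : flipBit b j ≠ b := fun h => by
  simpa [flipBit] using congrFun h j

lemma flipBit_injective (b : α → Bool) : Function.Injective (flipBit b) := by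
  intro j k h
  by_contra hjk
  simpa [flipBit, Function.update_of_ne hjk] using congrFun h j

lemma hammingDist_flipBit [Fintype α] (b : α → Bool) (j : α) :
    hammingDist b (flipBit b j) = 1 := by
  rw [hammingDist, card_eq_one]
  refine ⟨j, ?_⟩
  ext k
  rw [mem_filter]
  by_cases hk : k = j
  · subst hk; simp [flipBit]
  · simp [flipBit, hk]

end BitFlip

section Weight

variable {L : ℕ}

lemma wt_flipBit_of_eq_false {b : Fin L → Bool} {j : Fin L} (h : b j = false) :
    wt (flipBit b j) = wt b + 1 := by
  have : ({k | flipBit b j k = true} : Finset (Fin L)) =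
      insert j ({k | b k = true} : Finset _) := by
    ext k; by_cases hk : k = j <;> simp [flipBit, hk, h]
  rw [wt, this, card_insert_of_notMem (by simp [h]), wt]

lemma wt_flipBit_of_eq_true {b : Fin L → Bool} {j : Fin L} (h : b j = true) :
    wt (flipBit b j) = wt b - 1 := by
  have : ({k | flipBit b j k = true} : Finset (Fin L)) =
      erase ({k | b k = true} : Finset _) j := by
    ext k; by_cases hk : k = j <;> simp [flipBit, hk, h]
  rw [wt, this, card_erase_of_mem (by simp [h]), wt]

lemma wt_sub_one_le_wt_flipBit (b : Fin L → Bool) (j : Fin L) :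
    wt b - 1 ≤ wt (flipBit b j) := by
  cases h : b j
  · rw [wt_flipBit_of_eq_false h]; omega
  · rw [wt_flipBit_of_eq_true h]

lemma card_filter_eq_false (b : Fin L → Bool) : #{j | b j = false} = L - wt b := by
  have := card_filter_add_card_filter_not (s := univ) (fun j => b j = true)
  simp only [Bool.not_eq_true, card_univ, Fintype.card_fin] at this
  rw [wt]; omega

lemma card_filter_le_wt_flipBit_of_le_sub_one {b : Fin L → Bool} {v : ℕ} (h : v ≤ wt b - 1) :
    #{j | v ≤ wt (flipBit b j)} = L := by
  rw [filter_true_of_mem fun j _ => h.trans (wt_sub_one_le_wt_flipBit b j), card_univ,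
    Fintype.card_fin]

lemma sub_le_card_filter_le_wt_flipBit {b : Fin L → Bool} {v : ℕ} (h : v ≤ wt b) :
    L - v ≤ #{j | v ≤ wt (flipBit b j)} := by
  by_cases hv : v ≤ wt b - 1
  · rw [card_filter_le_wt_flipBit_of_le_sub_one hv]; omega
  · have hzeros :
        ({j | b j = false} : Finset (Fin L)) ⊆ ({j | v ≤ wt (flipBit b j)} : Finset _) := by
      intro j hj
      simp only [mem_filter, mem_univ, true_and] at hj ⊢
      rw [wt_flipBit_of_eq_false hj]; omega
    calc L - v = #{j | b j = false} := by rw [card_filter_eq_false]; omega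
      _ ≤ _ := card_le_card hzeros

lemma card_filter_wt_eq (j : ℕ) : #{b : Fin L → Bool | wt b = j} = L.choose j := by
  conv_rhs => rw [← Fintype.card_fin L, ← card_univ, ← card_powersetCard]
  refine card_nbij' (fun b => ({k | b k = true} : Finset _)) (fun s k => k ∈ s) ?_ ?_ ?_ ?_
  · intro b hb
    rw [mem_coe, mem_filter] at hb
    simpa [mem_powersetCard, wt] using hb.2
  · intro s hs
    simp only [mem_coe, mem_powersetCard] at hs
    simp [wt, ← hs.2]
  · intro b _; funext k; simp
  · intro s _; ext k; simp

lemma card_filter_le_wt (v : ℕ) : #{b : Fin L → Bool | v ≤ wt b} = bge L v := by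
  rw [card_eq_sum_card_fiberwise (f := wt) (t := Icc v L)]
  · refine sum_congr rfl fun j hj => ?_
    rw [filter_filter, ← card_filter_wt_eq]
    congr 1
    exact filter_congr fun b _ => ⟨And.right, fun h => ⟨h ▸ (mem_Icc.1 hj).1, h⟩⟩
  · intro b hb
    simp only [coe_filter, mem_univ, true_and, Set.mem_ofPred_eq] at hb
    exact mem_Icc.2 ⟨hb, (card_filter_le _ _).trans (by simp)⟩

end Weight

section Distance

variable {m L : ℕ}

lemma hdist_comm (x y : Fin m → Fin L → Bool) : hdist x y = hdist y x :=
  sum_congr rfl fun _ _ => hammingDist_comm _ _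

lemma hdist_triangle (x y z : Fin m → Fin L → Bool) : hdist x z ≤ hdist x y + hdist y z := by
  rw [hdist, hdist, hdist, ← sum_add_distrib]
  exact sum_le_sum fun i _ => hammingDist_triangle (x i) (y i) (z i)

lemma hdist_pos {x y : Fin m → Fin L → Bool} (h : x ≠ y) : 0 < hdist x y := by
  obtain ⟨i, hi⟩ := Function.ne_iff.1 h
  exact (hammingDist_pos.2 hi).trans_le
    (single_le_sum (f := fun i => hammingDist (x i) (y i)) (fun _ _ => Nat.zero_le _) (mem_univ i))

lemma disjoint_filter_hdist_le {x y : Fin m → Fin L → Bool} {t : ℕ} (h : 2 * t < hdist x y)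
    (A : Finset (Fin m → Fin L → Bool)) :
    Disjoint {z ∈ A | hdist x z ≤ t} {z ∈ A | hdist y z ≤ t} := by
  refine disjoint_left.2 fun z hzx hzy => ?_
  rw [mem_filter] at hzx hzy
  have := hdist_triangle x z y
  rw [hdist_comm z y] at this
  omega

end Distance

section Flips

variable {ι α : Type*} [DecidableEq ι] [DecidableEq α]

def flipAt (c : ι → α → Bool) (S : Finset ι) (f : ∀ i ∈ S, α) : ι → α → Bool :=
  fun i => if h : i ∈ S then flipBit (c i) (f i h) else c i

lemma flipAt_injective (c : ι → α → Bool) :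
    Function.Injective fun p : (S : Finset ι) × (∀ i ∈ S, α) => flipAt c p.1 p.2 := by
  rintro ⟨S, f⟩ ⟨S', f'⟩ h
  have hS : S = S' := by
    ext i
    have := congrFun h i
    by_cases hi : i ∈ S <;> by_cases hi' : i ∈ S' <;>
      simp_all [flipAt, flipBit_ne, (flipBit_ne _ _).symm]
  subst hS
  have hf : f = f' := funext fun i => funext fun hi =>
    flipBit_injective (c i) (by simpa [flipAt, hi] using congrFun h i)
  rw [hf]

lemma hdist_flipAt {m L : ℕ} (c : Fin m → Fin L → Bool) (S : Finset (Fin m))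
    (f : ∀ i ∈ S, Fin L) : hdist c (flipAt c S f) = #S := by
  calc hdist c (flipAt c S f) = ∑ i, if i ∈ S then 1 else 0 :=
        sum_congr rfl fun i _ => by by_cases hi : i ∈ S <;> simp [flipAt, hi, hammingDist_flipBit]
    _ = #S := by simp

end Flips

section WeightBox

variable {m : ℕ} (L : ℕ)

def weightBox (τ : Fin m → ℕ) : Finset (Fin m → Fin L → Bool) :=
  Fintype.piFinset fun i => {b | τ i ≤ wt b}

variable {L}

lemma mem_weightBox {τ : Fin m → ℕ} {x : Fin m → Fin L → Bool} :
    x ∈ weightBox L τ ↔ ∀ i, τ i ≤ wt (x i) := by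
  simp only [weightBox, Fintype.mem_piFinset]
  exact forall_congr' fun i => by rw [mem_filter]; simp

lemma card_weightBox (τ : Fin m → ℕ) : #(weightBox L τ) = ∏ i, bge L (τ i) := by
  simp only [weightBox, Fintype.card_piFinset, card_filter_le_wt]

lemma sum_prod_card_le_card_filter_hdist_le {τ : Fin m → ℕ} {c : Fin m → Fin L → Bool}
    (hc : c ∈ weightBox L τ) (t : ℕ) :
    ∑ S ∈ (univ : Finset (Fin m)).powerset with #S ≤ t,
        ∏ i ∈ S, #{j | τ i ≤ wt (flipBit (c i) j)} ≤
      #{z ∈ weightBox L τ | hdist c z ≤ t} := by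
  let K : Fin m → Finset (Fin L) := fun i => {j | τ i ≤ wt (flipBit (c i) j)}
  calc _ = #({S ∈ (univ : Finset (Fin m)).powerset | #S ≤ t}.sigma fun S => S.pi K) := by
        simp only [card_sigma, card_pi, K]
    _ ≤ _ := by
      refine card_le_card_of_injOn _ ?_ (flipAt_injective c).injOn
      rintro ⟨S, f⟩ hSf
      simp only [coe_sigma, Set.mem_sigma_iff, coe_filter, mem_powerset, subset_univ,
        true_and, Set.mem_ofPred_eq, mem_coe, mem_pi] at hSf
      rw [mem_coe, mem_filter, mem_weightBox, hdist_flipAt]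
      refine ⟨fun i => ?_, hSf.1⟩
      by_cases hi : i ∈ S
      · have := hSf.2 i hi
        rw [mem_filter] at this
        simpa [flipAt, hi] using this.2
      · simpa [flipAt, hi] using mem_weightBox.1 hc i

end WeightBox

section SubsetSums

variable {ι : Type*} [DecidableEq ι]

lemma sum_powerset_inter_sdiff {M : Type*} [AddCommMonoid M] (s H : Finset ι)
    (F : Finset ι → Finset ι → M) :
    ∑ S ∈ s.powerset, F (S ∩ H) (S \ H) =
      ∑ A ∈ (s ∩ H).powerset, ∑ B ∈ (s \ H).powerset, F A B := by
  rw [← sum_product']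
  refine sum_nbij' (fun S => (S ∩ H, S \ H)) (fun p => p.1 ∪ p.2) ?_ ?_ ?_ ?_ fun _ _ => rfl
  · intro S hS
    simp only [mem_powerset, mem_product] at hS ⊢
    exact ⟨inter_subset_inter_right hS, sdiff_subset_sdiff hS le_rfl⟩
  · intro p hp
    simp only [mem_powerset, mem_product] at hp ⊢
    grind
  · intro S _
    exact sup_inf_sdiff S H
  · intro p hp
    simp only [mem_powerset, mem_product] at hp
    ext <;> simp only [mem_inter, mem_union, mem_sdiff] <;> grind

lemma sum_range_choose_smul_eq {M : Type*} [AddCommMonoid M] (n N : ℕ) (f : ℕ → M)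
    (hf : ∀ k, N ≤ k → f k = 0) :
    ∑ k ∈ range (n + 1), n.choose k • f k = ∑ k ∈ range N, n.choose k • f k := by
  rw [sum_subset (range_subset_range.2 (Nat.le_add_right (n + 1) N)) fun k _ hk => by
      rw [Nat.choose_eq_zero_of_lt (by simpa using hk), zero_smul],
    sum_subset (range_subset_range.2 (Nat.le_add_left N (n + 1))) fun k _ hk => by
      rw [hf k (by simpa using hk), smul_zero]]

lemma sum_powerset_filter_card_le_pow_mul_pow (s H : Finset ι) (a b t : ℕ) :
    ∑ S ∈ s.powerset with #S ≤ t, a ^ #(S ∩ H) * b ^ #(S \ H) =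
      ∑ t₁ ∈ range (t + 1), ∑ t₂ ∈ range (t + 1 - t₁),
        (#(s ∩ H)).choose t₁ * (#(s \ H)).choose t₂ * a ^ t₁ * b ^ t₂ := by
  let g : ℕ → ℕ → ℕ := fun x y => if x + y ≤ t then a ^ x * b ^ y else 0
  calc _ = ∑ S ∈ s.powerset, g #(S ∩ H) #(S \ H) := by
        simp only [sum_filter, g, card_inter_add_card_sdiff]
    _ = ∑ A ∈ (s ∩ H).powerset, ∑ B ∈ (s \ H).powerset, g #A #B :=
        sum_powerset_inter_sdiff s H fun A B => g #A #B
    _ = ∑ x ∈ range (#(s ∩ H) + 1), (#(s ∩ H)).choose x •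
          ∑ y ∈ range (#(s \ H) + 1), (#(s \ H)).choose y • g x y := by
        simp only [sum_powerset_apply_card (g _)]
        exact sum_powerset_apply_card fun x =>
          ∑ y ∈ range (#(s \ H) + 1), (#(s \ H)).choose y • g x y
    _ = ∑ x ∈ range (t + 1), (#(s ∩ H)).choose x •
          ∑ y ∈ range (t + 1 - x), (#(s \ H)).choose y • g x y := by
        rw [sum_range_choose_smul_eq _ (t + 1) _ fun x hx =>
          sum_eq_zero fun y _ => by simp [g, show ¬x + y ≤ t by omega]]
        refine sum_congr rfl fun x _ => ?_
        rw [sum_range_choose_smul_eq _ (t + 1 - x) _ fun y hy => by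
          simp [g, show ¬x + y ≤ t by omega]]
    _ = _ := by
        refine sum_congr rfl fun x _ => ?_
        rw [smul_sum]
        refine sum_congr rfl fun y hy => ?_
        simp only [g, if_pos (show x + y ≤ t by simp at hy; omega), smul_eq_mul]
        ring

lemma pow_card_inter_mul_pow_card_sdiff_le_prod {S H : Finset ι} {k : ι → ℕ} {a b : ℕ}
    (ha : ∀ i ∈ S ∩ H, a ≤ k i) (hb : ∀ i ∈ S \ H, b ≤ k i) :
    a ^ #(S ∩ H) * b ^ #(S \ H) ≤ ∏ i ∈ S, k i := by
  rw [← prod_inter_mul_prod_sdiff S H]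
  exact Nat.mul_le_mul (pow_card_le_prod _ _ _ ha) (pow_card_le_prod _ _ _ hb)

end SubsetSums

section Packing

variable {m L : ℕ}

lemma card_weightBox_ite (H : Finset (Fin m)) (u v : ℕ) :
    #(weightBox L fun i => if i ∈ H then u else v) = bge L u ^ #H * bge L v ^ #(univ \ H) := by
  simp only [card_weightBox, apply_ite, prod_ite, prod_const, filter_mem_eq_inter,
    filter_notMem_eq_sdiff, univ_inter]

lemma sum_pow_mul_pow_le_card_filter_hdist_le (H : Finset (Fin m)) {w : ℕ}
    {c : Fin m → Fin L → Bool} (hc : ∀ i, w ≤ wt (c i)) (t : ℕ) :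
    ∑ S ∈ (univ : Finset (Fin m)).powerset with #S ≤ t,
        L ^ #(S ∩ H) * (L - w) ^ #(S \ H) ≤
      #{z ∈ weightBox L (fun i => if i ∈ H then w - 1 else w) | hdist c z ≤ t} := by
  refine (sum_le_sum fun S _ => pow_card_inter_mul_pow_card_sdiff_le_prod ?_ ?_).trans
    (sum_prod_card_le_card_filter_hdist_le
      (mem_weightBox.2 fun i => le_trans (by split_ifs <;> omega) (hc i)) t)
  · intro i hi
    rw [if_pos (mem_inter.1 hi).2, card_filter_le_wt_flipBit_of_le_sub_one]
    have := hc i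
    omega
  · intro i hi
    rw [if_neg (mem_sdiff.1 hi).2]
    exact sub_le_card_filter_le_wt_flipBit (hc i)

lemma card_mul_le_card_of_pairwiseDisjoint {α β : Type*} [DecidableEq β] {C : Finset α}
    {A : Finset β} {U : α → Finset β} {D : ℕ} (hUA : ∀ c ∈ C, U c ⊆ A)
    (hU : (C : Set α).PairwiseDisjoint U) (hD : ∀ c ∈ C, D ≤ #(U c)) : #C * D ≤ #A :=
  calc #C * D = ∑ _c ∈ C, D := by rw [sum_const, smul_eq_mul]
    _ ≤ ∑ c ∈ C, #(U c) := sum_le_sum hD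
    _ = #(C.biUnion U) := (card_biUnion hU).symm
    _ ≤ #A := card_le_card (biUnion_subset.2 hUA)

end Packing

theorem stmt_15_general (m L w d m₀ : ℕ)
    (hm₀ : m₀ ≤ m)
    (C : Finset (Fin m → Fin L → Bool))
    (hC : ∀ c ∈ C, ∀ i, w ≤ wt (c i))
    (hmin : ∀ x ∈ C, ∀ y ∈ C, x ≠ y → d ≤ hdist x y) :
    (C.card : ℚ) ≤
      ((bge L (w - 1) : ℚ) ^ m₀ * (bge L w : ℚ) ^ (m - m₀)) /
        ((∑ t₁ ∈ Finset.range ((d - 1) / 2 + 1),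
            ∑ t₂ ∈ Finset.range ((d - 1) / 2 + 1 - t₁),
              Nat.choose m₀ t₁ * Nat.choose (m - m₀) t₂ * L ^ t₁ * (L - w) ^ t₂ : ℕ) : ℚ) := by
  classical
  set t := (d - 1) / 2
  set H : Finset (Fin m) := {i | (i : ℕ) < m₀}
  have hH : #H = m₀ := by simp [H, Fin.card_filter_val_lt, hm₀]
  have hHc : #(univ \ H) = m - m₀ := by
    rw [← compl_eq_univ_sdiff, card_compl, hH, Fintype.card_fin]
  have hcount := sum_powerset_filter_card_le_pow_mul_pow univ H L (L - w) t
  rw [univ_inter, hH, hHc] at hcount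
  have hdisj : (C : Set _).PairwiseDisjoint fun c =>
      {z ∈ weightBox L (fun i => if i ∈ H then w - 1 else w) | hdist c z ≤ t} :=
    -- `2 * t < d` unless `d = 0`, and then `hdist_pos` is what separates the balls
    fun x hx y hy hxy => disjoint_filter_hdist_le
      (by have := hmin x hx y hy hxy; have := hdist_pos hxy; omega) _
  have hpack := card_mul_le_card_of_pairwiseDisjoint (fun c _ => filter_subset _ _) hdisj
    fun c hc => hcount ▸ sum_pow_mul_pow_le_card_filter_hdist_le H (hC c hc) t
  rw [card_weightBox_ite, hH, hHc] at hpack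
  have hD : 0 < ∑ t₁ ∈ range (t + 1), ∑ t₂ ∈ range (t + 1 - t₁),
      m₀.choose t₁ * (m - m₀).choose t₂ * L ^ t₁ * (L - w) ^ t₂ :=
    hcount ▸ sum_pos' (fun _ _ => Nat.zero_le _) ⟨∅, by simp, by simp⟩
  rw [le_div_iff₀ (by exact_mod_cast hD)]
  exact_mod_cast hpack

/-- Proposition 13: sphere-packing bound for subblock energy-constrained
codes. For `d ≤ 2m+1`, `0 ≤ m₀ ≤ m` and `t = ⌊(d-1)/2⌋`, every code in
`S(m,L,w)` with minimum Hamming distance `d` satisfies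
`|C| ≤ B(L,w-1)^{m₀}·B(L,w)^{m-m₀} / Σ_{t₁+t₂≤t} C(m₀,t₁)C(m-m₀,t₂)L^{t₁}(L-w)^{t₂}`. -/
theorem stmt_15 (m L w d m₀ : ℕ) (hw1 : 1 ≤ w) (hw2 : w ≤ L)
    (hm₀ : m₀ ≤ m) (hd : d ≤ 2 * m + 1)
    (C : Finset (Fin m → Fin L → Bool))
    (hC : ∀ c ∈ C, ∀ i, w ≤ wt (c i))
    (hmin : ∀ x ∈ C, ∀ y ∈ C, x ≠ y → d ≤ hdist x y) :
    (C.card : ℚ) ≤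
      ((bge L (w - 1) : ℚ) ^ m₀ * (bge L w : ℚ) ^ (m - m₀)) /
        ((∑ t₁ ∈ Finset.range ((d - 1) / 2 + 1),
            ∑ t₂ ∈ Finset.range ((d - 1) / 2 + 1 - t₁),
              Nat.choose m₀ t₁ * Nat.choose (m - m₀) t₂ * L ^ t₁ * (L - w) ^ t₂ : ℕ) : ℚ) :=
  stmt_15_general m L w d m₀ hm₀ C hC hmin
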